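/- Let d ≥ 1 and let f(x,y) ∈ ℂ[x,y] be a nonzero squarefree homogeneous polynomial of degree d (a square-free binary form). Then the polynomial F(x,y,z) = f(x,y) + z^d is irreducible in ℂ[x,y,z]. -/

import Mathlib

/-!
Viewed as a polynomial in `z` over the UFD `ℂ[x, y]`, `F = z ^ d + f` is monic and all its
non-leading coefficients are divisible by any prime factor `p` of `f`. Homogeneity of positive
degree makes `f` a non-unit, so such a `p` exists, and squarefreeness gives `p ^ 2 ∤ f`;
Eisenstein's criterion at `(p)` finishes.
-/

theorem Squarefree.exists_prime_dvd_not_sq_dvd {R : Type*} [CommMonoidWithZero R]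
    [UniqueFactorizationMonoid R] [Nontrivial R] {a : R} (ha : Squarefree a) (hu : ¬IsUnit a) :
    ∃ p, Prime p ∧ p ∣ a ∧ ¬p ^ 2 ∣ a := by
  obtain ⟨p, hp, hpa⟩ := WfDvdMonoid.exists_irreducible_factor hu ha.ne_zero
  exact ⟨p, hp.prime, hpa, fun h => hp.not_isUnit (ha p (sq p ▸ h))⟩

namespace Polynomial

variable {R : Type*} [CommRing R] [IsDomain R]

theorem irreducible_X_pow_sub_C_of_prime_dvd {p a : R} (hp : Prime p) (hpa : p ∣ a)
    (hpa2 : ¬p ^ 2 ∣ a) {n : ℕ} (hn : n ≠ 0) : Irreducible (X ^ n - C a) := by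
  have hmonic : (X ^ n - C a).Monic := monic_X_pow_sub_C a hn
  refine IsEisensteinAt.irreducible (𝓟 := Ideal.span {p}) ?_
    ((Ideal.span_singleton_prime hp.ne_zero).mpr hp) hmonic.isPrimitive
    (by rw [natDegree_X_pow_sub_C]; omega)
  refine ⟨?_, fun {k} hk => ?_, ?_⟩
  · rw [hmonic.leadingCoeff, Ideal.mem_span_singleton]
    exact hp.not_dvd_one
  · rw [natDegree_X_pow_sub_C] at hk
    rw [Ideal.mem_span_singleton, coeff_sub, coeff_X_pow, if_neg hk.ne, coeff_C, zero_sub,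
      dvd_neg]
    split_ifs
    · exact hpa
    · exact dvd_zero p
  · rw [Ideal.span_singleton_pow, Ideal.mem_span_singleton, coeff_sub, coeff_X_pow,
      if_neg (Ne.symm hn), coeff_C_zero, zero_sub, dvd_neg]
    exact hpa2

theorem irreducible_X_pow_sub_C_of_squarefree [UniqueFactorizationMonoid R] {a : R}
    (ha : Squarefree a) (hu : ¬IsUnit a) {n : ℕ} (hn : n ≠ 0) : Irreducible (X ^ n - C a) := by
  obtain ⟨p, hp, hpa, hpa2⟩ := ha.exists_prime_dvd_not_sq_dvd hu
  exact irreducible_X_pow_sub_C_of_prime_dvd hp hpa hpa2 hn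

end Polynomial

open MvPolynomial

theorem MvPolynomial.IsHomogeneous.not_isUnit {σ R : Type*} [CommSemiring R] [Nontrivial R]
    {φ : MvPolynomial σ R} {n : ℕ} (hφ : φ.IsHomogeneous n) (hn : n ≠ 0) : ¬IsUnit φ := by
  intro hu
  have h0 : constantCoeff φ = 0 := by
    rw [constantCoeff_eq]
    exact hφ.coeff_eq_zero (by simpa using hn.symm)
  exact not_isUnit_zero (h0 ▸ hu.map constantCoeff)

theorem MvPolynomial.optionEquivLeft_rename_some {σ R : Type*} [CommSemiring R]
    (g : MvPolynomial σ R) : optionEquivLeft R σ (rename some g) = Polynomial.C g := by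
  induction g using MvPolynomial.induction_on <;> simp_all

theorem MvPolynomial.optionEquivLeft_renameEquiv_rename_castSucc_add_X_last_pow
    {R : Type*} [CommSemiring R] {n : ℕ} (g : MvPolynomial (Fin n) R) (d : ℕ) :
    optionEquivLeft R (Fin n) (renameEquiv R finSuccEquivLast
      (rename Fin.castSucc g + X (Fin.last n) ^ d)) = Polynomial.C g + Polynomial.X ^ d := by
  simp [rename_rename, Function.comp_def, finSuccEquivLast_castSucc, optionEquivLeft_rename_some]

theorem squarefree_binary_form_plus_zd_irreducible (d : ℕ) (hd : 1 ≤ d)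
    (f : MvPolynomial (Fin 2) ℂ) (hfhom : f.IsHomogeneous d)
    (hsf : Squarefree f) :
    Irreducible
      (rename (Fin.castSucc : Fin 2 → Fin 3) f + (X 2 : MvPolynomial (Fin 3) ℂ) ^ d) := by
  have hunit : ¬IsUnit (-f) := (IsUnit.neg_iff f).not.mpr (hfhom.not_isUnit (by omega))
  have hpoly : Irreducible (Polynomial.C f + Polynomial.X ^ d) := by
    simpa only [map_neg, sub_neg_eq_add, add_comm] using
      Polynomial.irreducible_X_pow_sub_C_of_squarefree
        ((Associated.refl f).neg_right.squarefree_iff.mp hsf) hunit (n := d) (by omega)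
  rw [← optionEquivLeft_renameEquiv_rename_castSucc_add_X_last_pow f d] at hpoly
  exact (MulEquiv.irreducible_iff (renameEquiv ℂ finSuccEquivLast)).mp
    ((MulEquiv.irreducible_iff (optionEquivLeft ℂ (Fin 2))).mp hpoly)
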